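/- arXiv:2206.06332 — 4 statements merged into one kernel-verified Lean document; each statement's English description precedes it below -/
import Mathlib

section
/- A pure quaternion c belongs to the spherical Mandelbrot set if and only if ‖Q_c^(n)(0)‖ ≤ 2 for all n ∈ ℕ. -/
open scoped Quaternion
open Bornology

noncomputable def sCoord (ρ θ φ : ℝ) : ℍ[ℝ] :=
  ⟨0, ρ * (Real.sin φ * Real.cos θ), ρ * (Real.sin φ * Real.sin θ), ρ * Real.cos φ⟩

noncomputable def sphRho (q : ℍ[ℝ]) : ℝ := ‖q‖

noncomputable def sphTheta (q : ℍ[ℝ]) : ℝ :=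
  if q.imI = 0 ∧ q.imJ = 0 then 0
  else if Complex.arg ⟨q.imI, q.imJ⟩ < 0 then Complex.arg ⟨q.imI, q.imJ⟩ + 2 * Real.pi
  else Complex.arg ⟨q.imI, q.imJ⟩

open Classical in
noncomputable def sphPhi (q : ℍ[ℝ]) : ℝ :=
  if q = 0 then 0 else Real.arccos (q.imK / ‖q‖)

noncomputable def sprod (q₁ q₂ : ℍ[ℝ]) : ℍ[ℝ] :=
  sCoord (sphRho q₁ * sphRho q₂) (sphTheta q₁ + sphTheta q₂) (sphPhi q₁ + sphPhi q₂)

noncomputable def spow (n : ℕ) (q : ℍ[ℝ]) : ℍ[ℝ] :=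
  sCoord (sphRho q ^ n) (n * sphTheta q) (n * sphPhi q)

/-!
The spherical square satisfies `‖sp₂ q‖ = ‖q‖²`, hence `‖Q_c q‖ ≥ ‖q‖² - ‖c‖`, so once an iterate has norm `2 + ε > 2` and at least `‖c‖`, each further
step at least triples the excess over `2`, and the orbit escapes. Such an iterate exists as soon as
some iterate exceeds `2`: it is that iterate if `‖c‖ ≤ 2`, and the first iterate `c` otherwise.
-/

section EscapeCriterion

variable {a : ℕ → ℝ} {C : ℝ}

theorem two_add_three_pow_mul_le_of_sq_sub_le (hrec : ∀ n, a n ^ 2 - C ≤ a (n + 1)) {M : ℕ}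
    (h2 : 2 < a M) (hC : C ≤ a M) (k : ℕ) : 2 + 3 ^ k * (a M - 2) ≤ a (M + k) := by
  induction k with
  | zero => simp
  | succ k ih =>
    set t := 3 ^ k * (a M - 2)
    have ht : a M - 2 ≤ t := le_mul_of_one_le_left (by linarith) (one_le_pow₀ (by norm_num))
    calc 2 + 3 ^ (k + 1) * (a M - 2) = 2 + 3 * t := by ring
      -- `(2 + t)² - C ≥ (2 + t)² - (2 + t) = 2 + 3t + t²`
      _ ≤ (2 + t) ^ 2 - C := by nlinarith
      _ ≤ a (M + k) ^ 2 - C := by gcongr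
      _ ≤ a (M + k + 1) := hrec (M + k)

theorem not_bddAbove_range_of_sq_sub_le (hrec : ∀ n, a n ^ 2 - C ≤ a (n + 1)) {M : ℕ}
    (h2 : 2 < a M) (hC : C ≤ a M) : ¬ BddAbove (Set.range a) := by
  rintro ⟨R, hR⟩
  have hε : 0 < a M - 2 := by linarith
  obtain ⟨k, hk⟩ := pow_unbounded_of_one_lt ((R - 2) / (a M - 2)) (by norm_num : (1 : ℝ) < 3)
  rw [div_lt_iff₀ hε] at hk
  have := two_add_three_pow_mul_le_of_sq_sub_le hrec h2 hC k
  have := hR ⟨M + k, rfl⟩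
  linarith

theorem le_two_of_bddAbove_range_of_sq_sub_le (hrec : ∀ n, a n ^ 2 - C ≤ a (n + 1))
    (h1 : C ≤ a 1) (hbdd : BddAbove (Set.range a)) (n : ℕ) : a n ≤ 2 := by
  by_contra! hn
  rcases le_or_gt C 2 with hC | hC
  · exact not_bddAbove_range_of_sq_sub_le hrec hn (by linarith) hbdd
  · exact not_bddAbove_range_of_sq_sub_le hrec (by linarith) h1 hbdd

end EscapeCriterion

theorem norm_sCoord (ρ θ φ : ℝ) : ‖sCoord ρ θ φ‖ = |ρ| := by
  rw [← Real.sqrt_sq_eq_abs, norm_eq_sqrt_real_inner, Quaternion.inner_self,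
    Quaternion.normSq_def']
  congr 1
  simp only [sCoord]
  linear_combination (ρ ^ 2 * Real.sin φ ^ 2) * Real.sin_sq_add_cos_sq θ +
    ρ ^ 2 * Real.sin_sq_add_cos_sq φ

theorem norm_spow (n : ℕ) (q : ℍ[ℝ]) : ‖spow n q‖ = ‖q‖ ^ n := by
  rw [spow, norm_sCoord, sphRho, abs_of_nonneg (by positivity)]

theorem norm_sq_sub_le_norm_spow_two_add (q c : ℍ[ℝ]) : ‖q‖ ^ 2 - ‖c‖ ≤ ‖spow 2 q + c‖ := by
  rw [← norm_spow 2 q]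
  simpa using norm_sub_le (spow 2 q + c) c

theorem spherical_mandelbrot_iff_general (c : ℍ[ℝ]) :
    Bornology.IsBounded
        (Set.range fun n : ℕ => (fun q : ℍ[ℝ] => spow 2 q + c)^[n] 0) ↔
      ∀ n : ℕ, ‖(fun q : ℍ[ℝ] => spow 2 q + c)^[n] 0‖ ≤ 2 := by
  set z := fun n : ℕ => (fun q : ℍ[ℝ] => spow 2 q + c)^[n] 0
  have hrec : ∀ n, ‖z n‖ ^ 2 - ‖c‖ ≤ ‖z (n + 1)‖ := fun n => by
    simpa only [z, Function.iterate_succ_apply'] using norm_sq_sub_le_norm_spow_two_add (z n) c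
  have h1 : ‖c‖ ≤ ‖z 1‖ := by
    have : spow 2 0 = 0 := norm_eq_zero.1 (by simp [norm_spow])
    simp [z, this]
  simp only [isBounded_iff_forall_norm_le, Set.forall_mem_range]
  exact ⟨fun ⟨R, hR⟩ => le_two_of_bddAbove_range_of_sq_sub_le hrec h1
    ⟨R, Set.forall_mem_range.2 hR⟩, fun h => ⟨2, h⟩⟩

/-- Membership in the spherical Mandelbrot set is equivalent to all iterates
being bounded by 2 in norm. -/
theorem spherical_mandelbrot_iff (c : ℍ[ℝ]) (hc : c.re = 0) :
    Bornology.IsBounded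
        (Set.range fun n : ℕ => (fun q : ℍ[ℝ] => spow 2 q + c)^[n] 0) ↔
      ∀ n : ℕ, ‖(fun q : ℍ[ℝ] => spow 2 q + c)^[n] 0‖ ≤ 2 :=
  spherical_mandelbrot_iff_general c
end

section
/- Let 𝑙, 𝑚 ∈ {i, j, k} be distinct imaginary units. A quaternion q = q₀ + q₁𝑚 + q₂𝑙 belongs to the quaternionic Mandelbrot set if and only if the complex number q₀ + i√(q₁² + q₂²) belongs to the classical Mandelbrot set. Hence the 3D slices H(1,i,j), H(1,i,k), H(1,j,k) are rotations of the classical Mandelbrot set around the real axis. -/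
open scoped Quaternion

/-!
If `u` is a purely imaginary unit quaternion then `u * u = -1`, so `a + b i ↦ a + b u` is an
`ℝ`-algebra embedding `ℂ → ℍ`; it commutes with conjugation, hence preserves norms. It carries
the orbit of `0` under `z ↦ z ^ 2 + c` to the orbit under `z ↦ z ^ 2 + (a + b u)`, so one is
bounded iff the other is. Finally `q₁ m + q₂ l` is purely imaginary of norm `√(q₁ ^ 2 + q₂ ^ 2)`,
so it is `√(q₁ ^ 2 + q₂ ^ 2) • u` for such a `u`.
-/

open Bornology Set

def mandelbrotOrbit {R : Type*} [Monoid R] [Add R] [Zero R] (c : R) (n : ℕ) : R :=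
  (fun z => z ^ 2 + c)^[n] 0

theorem map_mandelbrotOrbit {R S F : Type*} [Semiring R] [Semiring S] [FunLike F R S]
    [RingHomClass F R S] (φ : F) (c : R) (n : ℕ) :
    φ (mandelbrotOrbit c n) = mandelbrotOrbit (φ c) n := by
  rw [mandelbrotOrbit, mandelbrotOrbit, ← map_zero φ]
  exact (Function.Semiconj.iterate_right (fun z => by simp) n).eq 0

theorem isBounded_range_comp_iff_of_norm_map_eq {ι E F : Type*} [SeminormedAddGroup E]
    [SeminormedAddGroup F] {f : E → F} (hf : ∀ x, ‖f x‖ = ‖x‖) (s : ι → E) :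
    IsBounded (range (f ∘ s)) ↔ IsBounded (range s) := by
  simp only [isBounded_iff_forall_norm_le, forall_mem_range, Function.comp_apply, hf]

namespace Quaternion

theorem mul_self_eq_neg_one {u : ℍ} (hre : u.re = 0) (hu : ‖u‖ = 1) : u * u = -1 := by
  have h := self_mul_star u
  rwa [star_eq_neg.2 hre, normSq_eq_norm_mul_self, hu, mul_neg, one_mul, coe_one,
    neg_eq_iff_eq_neg] at h

theorem exists_re_eq_zero_norm_eq_one_smul_eq {w : ℍ} (hw : w.re = 0) :
    ∃ u : ℍ, u.re = 0 ∧ ‖u‖ = 1 ∧ ‖w‖ • u = w := by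
  by_cases h0 : w = 0
  · refine ⟨(Complex.I : ℍ), rfl, ?_, by simp [h0]⟩
    rw [norm_eq_sqrt_real_inner, inner_self, normSq_def']
    simp
  · refine ⟨‖w‖⁻¹ • w, by simp [hw], norm_smul_inv_norm h0, ?_⟩
    rw [smul_smul, mul_inv_cancel₀ (norm_ne_zero_iff.2 h0), one_smul]

theorem norm_liftAux {u : ℍ} (hre : u.re = 0) (hu : ‖u‖ = 1) (z : ℂ) :
    ‖Complex.liftAux u (mul_self_eq_neg_one hre hu) z‖ = ‖z‖ := by
  set f := Complex.liftAux u (mul_self_eq_neg_one hre hu)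
  have hstar : star (f z) = f ((starRingEnd ℂ) z) := by
    simp [f, Complex.liftAux_apply, star_eq_neg.2 hre]
  have h : ((normSq (f z) : ℝ) : ℍ) = (Complex.normSq z : ℝ) := by
    rw [← self_mul_star (f z), hstar, ← map_mul, Complex.mul_conj]
    simp [f]
  rw [normSq_eq_norm_mul_self, Complex.normSq_eq_norm_sq, coe_inj, ← sq] at h
  exact (sq_eq_sq₀ (norm_nonneg _) (norm_nonneg _)).1 h

theorem isBounded_range_mandelbrotOrbit_iff {u : ℍ} (hre : u.re = 0) (hu : ‖u‖ = 1) (a b : ℝ) :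
    IsBounded (range (mandelbrotOrbit ((a : ℍ) + b • u))) ↔
      IsBounded (range (mandelbrotOrbit ((a : ℂ) + b * Complex.I))) := by
  set f := Complex.liftAux u (mul_self_eq_neg_one hre hu)
  have hc : f ((a : ℂ) + b * Complex.I) = (a : ℍ) + b • u := by
    simp [f]
  rw [← hc, ← isBounded_range_comp_iff_of_norm_map_eq (norm_liftAux hre hu)]
  congr! 2
  exact funext fun n => (map_mandelbrotOrbit f _ n).symm

theorem re_smul_add_smul_eq_zero_and_normSq_eq {l m : ℍ}
    (hl : l ∈ ({⟨0, 1, 0, 0⟩, ⟨0, 0, 1, 0⟩, ⟨0, 0, 0, 1⟩} : Set ℍ))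
    (hm : m ∈ ({⟨0, 1, 0, 0⟩, ⟨0, 0, 1, 0⟩, ⟨0, 0, 0, 1⟩} : Set ℍ))
    (hlm : l ≠ m) (q₁ q₂ : ℝ) :
    (q₁ • m + q₂ • l).re = 0 ∧ normSq (q₁ • m + q₂ • l) = q₁ ^ 2 + q₂ ^ 2 := by
  rw [normSq_def']
  rcases hl with hl | hl | hl <;> rcases hm with hm | hm | hm <;>
    first
    | exact absurd (hl.trans hm.symm) hlm
    | obtain ⟨hl₀, hl₁, hl₂, hl₃⟩ := QuaternionAlgebra.ext_iff.mp hl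
      obtain ⟨hm₀, hm₁, hm₂, hm₃⟩ := QuaternionAlgebra.ext_iff.mp hm
      dsimp only at hl₀ hl₁ hl₂ hl₃ hm₀ hm₁ hm₂ hm₃
      constructor <;> simp [hl₀, hl₁, hl₂, hl₃, hm₀, hm₁, hm₂, hm₃, add_comm]

end Quaternion

/-- For distinct imaginary units 𝑙, 𝑚 ∈ {i, j, k}, the quaternion
q₀ + q₁𝑚 + q₂𝑙 is in the quaternionic Mandelbrot set iff the complex number
q₀ + √(q₁² + q₂²) i is in the classical Mandelbrot set; hence the 3D slices
H(1,i,j), H(1,i,k), H(1,j,k) are rotations of the classical Mandelbrot set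
around the real axis. -/
theorem quaternionic_slices_are_rotations (l m : ℍ[ℝ])
    (hl : l ∈ ({⟨0, 1, 0, 0⟩, ⟨0, 0, 1, 0⟩, ⟨0, 0, 0, 1⟩} : Set ℍ[ℝ]))
    (hm : m ∈ ({⟨0, 1, 0, 0⟩, ⟨0, 0, 1, 0⟩, ⟨0, 0, 0, 1⟩} : Set ℍ[ℝ]))
    (hlm : l ≠ m) (q₀ q₁ q₂ : ℝ) :
    Bornology.IsBounded
        (Set.range fun n : ℕ =>
          (fun z : ℍ[ℝ] => z ^ 2 + ((q₀ : ℍ[ℝ]) + q₁ • m + q₂ • l))^[n] 0) ↔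
      Bornology.IsBounded
        (Set.range fun n : ℕ =>
          (fun z : ℂ => z ^ 2 +
            ((q₀ : ℂ) + (Real.sqrt (q₁ ^ 2 + q₂ ^ 2) : ℝ) * Complex.I))^[n] 0) := by
  obtain ⟨hw_re, hw_normSq⟩ :=
    Quaternion.re_smul_add_smul_eq_zero_and_normSq_eq hl hm hlm q₁ q₂
  obtain ⟨u, hu_re, hu_norm, hw⟩ := Quaternion.exists_re_eq_zero_norm_eq_one_smul_eq hw_re
  have hc : (q₀ : ℍ) + q₁ • m + q₂ • l = q₀ + √(q₁ ^ 2 + q₂ ^ 2) • u := by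
    rw [add_assoc, ← hw_normSq, ← Quaternion.inner_self, ← norm_eq_sqrt_real_inner, hw]
  rw [hc]
  exact Quaternion.isBounded_range_mandelbrotOrbit_iff hu_re hu_norm q₀ _
end

section
/- Let (a,b) ∈ ℝ² and consider the iteration Q_q(w) = w ×ₛ^{(1,2)} w + q on pure quaternions. If q = ai + bj lies in the xy-plane (z = 0) and c = a + bi ∈ ℂ, then for every n ≥ 1 one has Q_q^(n)(0) = ρₙ(i cos θₙ + j sin θₙ) and P_c^(n)(0) = ρₙ(cos θₙ + i sin θₙ) with the same ρₙ and θₙ, where P_c(z) = z² + c. Hence the z = 0 slice of the set M^{(1,2)} := {q pure : iterates bounded} has the same dynamics as the classical Mandelbrot set. -/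
open scoped Quaternion
open Bornology

def qmk (a b c d : ℝ) : ℍ[ℝ] := ⟨a, b, c, d⟩

/-!
On the xy-plane of pure quaternions `φ = π/2`, so `w ↦ w ×ₛ^{(1,2)} w` squares the radius and
doubles the angle `θ`: it is complex squaring transported by the isometry
`x + y i ↦ x i + y j`. This isometry therefore conjugates `P_c` to `Q_q`, so the two orbits of `0`
correspond point by point, with the same polar data, and are bounded together.
-/

/-- `w ×ₛ^{(1,2)} w` in the paper's notation. -/
noncomputable def bulbicSq (w : ℍ[ℝ]) : ℍ[ℝ] :=
  sCoord (sphRho w ^ 2) (2 * sphTheta w) (sphPhi w)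

theorem Isometry.isBounded_image_iff {α β : Type*} [PseudoMetricSpace α] [PseudoMetricSpace β]
    {f : α → β} (hf : Isometry f) {s : Set α} :
    IsBounded (f '' s) ↔ IsBounded s := by
  simp only [Metric.isBounded_iff, Set.forall_mem_image, hf.dist_eq]

theorem sphTheta_coe_angle (q : ℍ[ℝ]) :
    (sphTheta q : Real.Angle) = Complex.arg ⟨q.imI, q.imJ⟩ := by
  unfold sphTheta
  split_ifs with h
  · rw [h.1, h.2, show (⟨0, 0⟩ : ℂ) = 0 from rfl, Complex.arg_zero, Real.Angle.coe_zero]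
  · rw [Real.Angle.coe_add, Real.Angle.coe_two_pi, add_zero]
  · rfl

noncomputable def xyPlane : ℂ →ₗᵢ[ℝ] ℍ[ℝ] where
  toFun z := qmk 0 z.re z.im 0
  map_add' z w := by
    ext <;> simp only [Quaternion.re_add, Quaternion.imI_add, Quaternion.imJ_add,
      Quaternion.imK_add] <;> simp [qmk]
  map_smul' r z := by
    ext <;> simp only [Quaternion.re_smul, Quaternion.imI_smul, Quaternion.imJ_smul,
      Quaternion.imK_smul] <;> simp [qmk]
  norm_map' z := by
    show ‖qmk 0 z.re z.im 0‖ = ‖z‖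
    rw [← sq_eq_sq₀ (norm_nonneg _) (norm_nonneg _), sq, ← Quaternion.normSq_eq_norm_mul_self,
      Quaternion.normSq_def', ← Complex.normSq_eq_norm_sq, Complex.normSq_apply]
    simp [qmk, sq]

theorem xyPlane_apply (z : ℂ) : xyPlane z = qmk 0 z.re z.im 0 := rfl

theorem cos_sphTheta_xyPlane (z : ℂ) : Real.cos (sphTheta (xyPlane z)) = Real.cos z.arg := by
  rw [← Real.Angle.cos_coe, sphTheta_coe_angle, Real.Angle.cos_coe]
  rfl

theorem sin_sphTheta_xyPlane (z : ℂ) : Real.sin (sphTheta (xyPlane z)) = Real.sin z.arg := by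
  rw [← Real.Angle.sin_coe, sphTheta_coe_angle, Real.Angle.sin_coe]
  rfl

theorem sphPhi_xyPlane {z : ℂ} (hz : z ≠ 0) : sphPhi (xyPlane z) = Real.pi / 2 := by
  rw [sphPhi, if_neg ((map_ne_zero_iff _ xyPlane.injective).2 hz)]
  show Real.arccos (0 / _) = _
  rw [zero_div, Real.arccos_zero]

theorem bulbicSq_xyPlane (z : ℂ) : bulbicSq (xyPlane z) = xyPlane (z ^ 2) := by
  rcases eq_or_ne z 0 with rfl | hz
  · ext <;> simp [bulbicSq, sCoord, sphRho]
  have hre : ‖z‖ * Real.cos (sphTheta (xyPlane z)) = z.re := by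
    rw [cos_sphTheta_xyPlane, Complex.norm_mul_cos_arg]
  have him : ‖z‖ * Real.sin (sphTheta (xyPlane z)) = z.im := by
    rw [sin_sphTheta_xyPlane, Complex.norm_mul_sin_arg]
  rw [bulbicSq, sphRho, xyPlane.norm_map, sphPhi_xyPlane hz, sCoord, xyPlane_apply (z ^ 2), qmk]
  congr 1
  · rw [Real.sin_pi_div_two, Real.cos_two_mul', sq z, Complex.mul_re]
    linear_combination (‖z‖ * Real.cos (sphTheta (xyPlane z)) + z.re) * hre
      - (‖z‖ * Real.sin (sphTheta (xyPlane z)) + z.im) * him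
  · rw [Real.sin_pi_div_two, Real.sin_two_mul, sq z, Complex.mul_im]
    linear_combination 2 * (‖z‖ * Real.cos (sphTheta (xyPlane z))) * him + 2 * z.im * hre
  · rw [Real.cos_pi_div_two, mul_zero]

theorem xyPlane_eq_polar (z : ℂ) :
    xyPlane z = qmk 0 (‖z‖ * Real.cos z.arg) (‖z‖ * Real.sin z.arg) 0 := by
  simp [xyPlane_apply]

theorem semiconj_xyPlane_bulbicSq_add (c : ℂ) :
    Function.Semiconj xyPlane (fun z => z ^ 2 + c) (fun w => bulbicSq w + xyPlane c) := by
  intro z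
  simp only [map_add, bulbicSq_xyPlane]

/-- For q = ai + bj in the xy-plane and c = a + bi ∈ ℂ, the iterates of
Q_q(w) = w ×ₛ^{(1,2)} w + q and of P_c(z) = z² + c have the same polar data
ρₙ, θₙ in their respective planes; hence the z = 0 slice of M^{(1,2)} has the
same dynamics as the classical Mandelbrot set. -/
theorem bulbic_slice_dynamics (a b : ℝ) :
    (∃ ρ θ : ℕ → ℝ, ∀ n : ℕ, 1 ≤ n →
      (fun w : ℍ[ℝ] =>
          sCoord (sphRho w ^ 2) (2 * sphTheta w) (sphPhi w) + qmk 0 a b 0)^[n] 0 =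
        qmk 0 (ρ n * Real.cos (θ n)) (ρ n * Real.sin (θ n)) 0 ∧
      (fun z : ℂ => z ^ 2 + ((a : ℂ) + (b : ℂ) * Complex.I))^[n] 0 =
        (ρ n : ℂ) * ((Real.cos (θ n) : ℂ) + (Real.sin (θ n) : ℂ) * Complex.I)) ∧
    (Bornology.IsBounded
        (Set.range fun n : ℕ =>
          (fun w : ℍ[ℝ] =>
            sCoord (sphRho w ^ 2) (2 * sphTheta w) (sphPhi w) + qmk 0 a b 0)^[n] 0) ↔
      Bornology.IsBounded
        (Set.range fun n : ℕ =>
          (fun z : ℂ => z ^ 2 + ((a : ℂ) + (b : ℂ) * Complex.I))^[n] 0)) := by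
  set P : ℂ → ℂ := fun z => z ^ 2 + ((a : ℂ) + (b : ℂ) * Complex.I)
  have hq : qmk 0 a b 0 = xyPlane ((a : ℂ) + (b : ℂ) * Complex.I) := by simp [xyPlane_apply]
  have orbit : ∀ n, (fun w => bulbicSq w + qmk 0 a b 0)^[n] 0 = xyPlane (P^[n] 0) := fun n => by
    rw [hq, ← map_zero xyPlane]
    exact ((semiconj_xyPlane_bulbicSq_add _).iterate_right n 0).symm
  refine ⟨⟨fun n => ‖P^[n] 0‖, fun n => (P^[n] 0).arg, fun n _ => ⟨?_, ?_⟩⟩, ?_⟩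
  · exact (orbit n).trans (xyPlane_eq_polar _)
  · push_cast
    exact (Complex.norm_mul_cos_add_sin_mul_I _).symm
  · change IsBounded (Set.range fun n => (fun w => bulbicSq w + qmk 0 a b 0)^[n] 0) ↔ _
    rw [funext orbit, Set.range_comp', xyPlane.isometry.isBounded_image_iff]
end

section
/- Consider the iteration Q_q(w) = w ×ₛ^{(2,1)} w + q on pure quaternions, where ×ₛ^{(2,1)} doubles the angle φ, keeps θ, and squares the radius. For q = ak + bi + cj and the quaternion p = a + bi + cj, every iterate satisfies Q_q^(n)(0) = ρₙ[k cos φₙ + sin φₙ·(bi + cj)/√(b²+c²)] and P_p^(n)(0) = ρₙ[cos φₙ + sin φₙ·(bi + cj)/√(b²+c²)] with the same ρₙ, φₙ, where P_p(z) = z² + p uses quaternion multiplication. Hence the set M^{(2,1)} has the same dynamics as the 3D slice H(1,i,j) of the quaternionic Mandelbrot set. -/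
open scoped Quaternion
open Bornology

/-!
Put `β = √(b² + c²)`, `u = b / β`, `v = c / β`. The maps `x + yi ↦ y(ui + vj) + xk` and
`x + yi ↦ x + y(ui + vj)` are isometries of `ℂ` onto the planes `span{ui + vj, k}` and
`span{1, ui + vj}`. In Cartesian coordinates the `(2,1)`-square of a pure quaternion is
`w ↦ (2 w_k w_i, 2 w_k w_j, w_k² - w_i² - w_j²)`, which on the first plane is complex squaring;
on the second plane quaternion squaring is complex squaring as well. Both iterations are thus
conjugate to `z ↦ z² + (a + βi)`, and `ρₙ, φₙ` are the modulus and argument of its `n`-th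
iterate at `0`.
-/
namespace Quaternion

lemma sq_norm_eq_sum_sq (q : ℍ[ℝ]) : ‖q‖ ^ 2 = q.re ^ 2 + q.imI ^ 2 + q.imJ ^ 2 + q.imK ^ 2 := by
  rw [sq, ← normSq_eq_norm_mul_self, normSq_def']

end Quaternion

-- The factor `‖·‖` makes these identities hold also where `sphTheta` and `sphPhi` take their
-- junk value `0`.
lemma norm_mul_cos_sphTheta (q : ℍ[ℝ]) :
    ‖(⟨q.imI, q.imJ⟩ : ℂ)‖ * Real.cos (sphTheta q) = q.imI := by
  unfold sphTheta
  split_ifs with h0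
  · simp [h0.1, h0.2, show (⟨0, 0⟩ : ℂ) = 0 from rfl]
  · rw [Real.cos_add_two_pi, Complex.norm_mul_cos_arg]
  · rw [Complex.norm_mul_cos_arg]

lemma norm_mul_sin_sphTheta (q : ℍ[ℝ]) :
    ‖(⟨q.imI, q.imJ⟩ : ℂ)‖ * Real.sin (sphTheta q) = q.imJ := by
  unfold sphTheta
  split_ifs with h0
  · simp [h0.2]
  · rw [Real.sin_add_two_pi, Complex.norm_mul_sin_arg]
  · rw [Complex.norm_mul_sin_arg]

lemma norm_mul_cos_sphPhi (q : ℍ[ℝ]) : ‖q‖ * Real.cos (sphPhi q) = q.imK := by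
  unfold sphPhi
  split_ifs with h0
  · simp [h0]
  have hpos : 0 < ‖q‖ := norm_pos_iff.2 h0
  obtain ⟨hK₁, hK₂⟩ : -‖q‖ ≤ q.imK ∧ q.imK ≤ ‖q‖ :=
    abs_le_of_sq_le_sq' (by nlinarith [Quaternion.sq_norm_eq_sum_sq q]) hpos.le
  rw [Real.cos_arccos (by rwa [le_div_iff₀ hpos, neg_one_mul]) ((div_le_one hpos).2 hK₂)]
  field_simp

lemma norm_mul_sin_sphPhi {q : ℍ[ℝ]} (hq : q.re = 0) :
    ‖q‖ * Real.sin (sphPhi q) = ‖(⟨q.imI, q.imJ⟩ : ℂ)‖ := by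
  unfold sphPhi
  split_ifs with h0
  · simp only [h0, norm_zero, zero_mul, Quaternion.imI_zero, Quaternion.imJ_zero]
    exact norm_zero.symm
  have hpos : 0 < ‖q‖ := norm_pos_iff.2 h0
  rw [Real.sin_arccos, ← Real.sqrt_sq hpos.le, ← Real.sqrt_mul (sq_nonneg _), Real.sqrt_sq hpos.le,
    Complex.norm_def, Complex.normSq_mk]
  congr 1
  field_simp
  linear_combination (Quaternion.sq_norm_eq_sum_sq q) + q.re * hq

noncomputable def sprod21Sq (w : ℍ[ℝ]) : ℍ[ℝ] :=
  sCoord (sphRho w ^ 2) (sphTheta w) (2 * sphPhi w)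

lemma sprod21Sq_of_re_eq_zero {w : ℍ[ℝ]} (hw : w.re = 0) :
    sprod21Sq w =
      ⟨0, 2 * w.imK * w.imI, 2 * w.imK * w.imJ, w.imK ^ 2 - w.imI ^ 2 - w.imJ ^ 2⟩ := by
  have hcφ := norm_mul_cos_sphPhi w
  have hsφ := norm_mul_sin_sphPhi hw
  have hcθ := norm_mul_cos_sphTheta w
  have hsθ := norm_mul_sin_sphTheta w
  have hθ := Real.cos_sq_add_sin_sq (sphTheta w)
  set s := ‖(⟨w.imI, w.imJ⟩ : ℂ)‖
  ext
  · rfl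
  · show ‖w‖ ^ 2 * (Real.sin (2 * sphPhi w) * Real.cos (sphTheta w)) = _
    rw [Real.sin_two_mul]
    linear_combination (2 * ‖w‖ * Real.sin (sphPhi w) * Real.cos (sphTheta w)) * hcφ
      + (2 * w.imK * Real.cos (sphTheta w)) * hsφ + 2 * w.imK * hcθ
  · show ‖w‖ ^ 2 * (Real.sin (2 * sphPhi w) * Real.sin (sphTheta w)) = _
    rw [Real.sin_two_mul]
    linear_combination (2 * ‖w‖ * Real.sin (sphPhi w) * Real.sin (sphTheta w)) * hcφ
      + (2 * w.imK * Real.sin (sphTheta w)) * hsφ + 2 * w.imK * hsθ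
  · show ‖w‖ ^ 2 * Real.cos (2 * sphPhi w) = _
    rw [Real.cos_two_mul']
    linear_combination (‖w‖ * Real.cos (sphPhi w) + w.imK) * hcφ
      - (‖w‖ * Real.sin (sphPhi w) + s) * hsφ - (s * Real.cos (sphTheta w) + w.imI) * hcθ
      - (s * Real.sin (sphTheta w) + w.imJ) * hsθ + s ^ 2 * hθ

def embedIJK (u v : ℝ) (z : ℂ) : ℍ[ℝ] := ⟨0, z.im * u, z.im * v, z.re⟩

def embed1IJ (u v : ℝ) (z : ℂ) : ℍ[ℝ] := ⟨z.re, z.im * u, z.im * v, 0⟩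

@[simp]
lemma embedIJK_zero (u v : ℝ) : embedIJK u v 0 = 0 := by
  ext <;> simp [embedIJK]

@[simp]
lemma embed1IJ_zero (u v : ℝ) : embed1IJ u v 0 = 0 := by
  ext <;> simp [embed1IJ]

section UnitDirection

variable {u v : ℝ} (huv : u ^ 2 + v ^ 2 = 1)
include huv

lemma norm_embedIJK (z : ℂ) : ‖embedIJK u v z‖ = ‖z‖ := by
  rw [← sq_eq_sq₀ (norm_nonneg _) (norm_nonneg _), Quaternion.sq_norm_eq_sum_sq, Complex.sq_norm,
    Complex.normSq_apply]
  dsimp only [embedIJK]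
  linear_combination z.im ^ 2 * huv

lemma norm_embed1IJ (z : ℂ) : ‖embed1IJ u v z‖ = ‖z‖ := by
  rw [← sq_eq_sq₀ (norm_nonneg _) (norm_nonneg _), Quaternion.sq_norm_eq_sum_sq, Complex.sq_norm,
    Complex.normSq_apply]
  dsimp only [embed1IJ]
  linear_combination z.im ^ 2 * huv

lemma sprod21Sq_embedIJK (z : ℂ) : sprod21Sq (embedIJK u v z) = embedIJK u v (z ^ 2) := by
  rw [sprod21Sq_of_re_eq_zero rfl]
  ext <;> simp only [embedIJK, sq, Complex.mul_re, Complex.mul_im]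
  · ring
  · ring
  · linear_combination (-z.im ^ 2) * huv

lemma embed1IJ_sq (z : ℂ) : embed1IJ u v z ^ 2 = embed1IJ u v (z ^ 2) := by
  rw [sq, sq]
  ext <;> simp only [Quaternion.re_mul, Quaternion.imI_mul, Quaternion.imJ_mul,
    Quaternion.imK_mul] <;> simp only [embed1IJ, Complex.mul_re, Complex.mul_im]
  · linear_combination (-z.im ^ 2) * huv
  · ring
  · ring
  · ring

lemma semiconj_embedIJK (p : ℂ) :
    Function.Semiconj (embedIJK u v) (fun z => z ^ 2 + p) (fun w => sprod21Sq w + embedIJK u v p) := by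
  intro z
  change embedIJK u v (z ^ 2 + p) = sprod21Sq (embedIJK u v z) + embedIJK u v p
  rw [sprod21Sq_embedIJK huv]
  ext <;> simp only [Quaternion.re_add, Quaternion.imI_add, Quaternion.imJ_add,
    Quaternion.imK_add] <;> simp only [embedIJK, Complex.add_re, Complex.add_im] <;> ring

lemma semiconj_embed1IJ (p : ℂ) :
    Function.Semiconj (embed1IJ u v) (fun z => z ^ 2 + p) (fun z => z ^ 2 + embed1IJ u v p) := by
  intro z
  change embed1IJ u v (z ^ 2 + p) = embed1IJ u v z ^ 2 + embed1IJ u v p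
  rw [embed1IJ_sq huv]
  ext <;> simp only [Quaternion.re_add, Quaternion.imI_add, Quaternion.imJ_add,
    Quaternion.imK_add] <;> simp only [embed1IJ, Complex.add_re, Complex.add_im] <;> ring

lemma iterate_sprod21Sq_add_embedIJK (p : ℂ) (n : ℕ) :
    (fun w => sprod21Sq w + embedIJK u v p)^[n] 0 =
      embedIJK u v ((fun z => z ^ 2 + p)^[n] 0) := by
  rw [(semiconj_embedIJK huv p).iterate_right, embedIJK_zero]

lemma iterate_sq_add_embed1IJ (p : ℂ) (n : ℕ) :
    (fun z => z ^ 2 + embed1IJ u v p)^[n] 0 = embed1IJ u v ((fun z => z ^ 2 + p)^[n] 0) := by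
  rw [(semiconj_embed1IJ huv p).iterate_right, embed1IJ_zero]

end UnitDirection

lemma isBounded_range_iff_of_norm_eq {ι E F : Type*} [SeminormedAddCommGroup E]
    [SeminormedAddCommGroup F] {f : ι → E} {g : ι → F} (h : ∀ i, ‖f i‖ = ‖g i‖) :
    IsBounded (Set.range f) ↔ IsBounded (Set.range g) := by
  simp only [isBounded_iff_forall_norm_le, Set.forall_mem_range, h]

lemma embedIJK_eq_qmk (u v : ℝ) (z : ℂ) :
    embedIJK u v z = qmk 0 (‖z‖ * Real.sin (Complex.arg z) * u) (‖z‖ * Real.sin (Complex.arg z) * v)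
      (‖z‖ * Real.cos (Complex.arg z)) := by
  rw [Complex.norm_mul_sin_arg, Complex.norm_mul_cos_arg]; rfl

lemma embed1IJ_eq_qmk (u v : ℝ) (z : ℂ) :
    embed1IJ u v z = qmk (‖z‖ * Real.cos (Complex.arg z)) (‖z‖ * Real.sin (Complex.arg z) * u)
      (‖z‖ * Real.sin (Complex.arg z) * v) 0 := by
  rw [Complex.norm_mul_sin_arg, Complex.norm_mul_cos_arg]; rfl

/-- For q = ak + bi + cj and p = a + bi + cj (with (b,c) ≠ (0,0)), the
iterates of Q_q(w) = w ×ₛ^{(2,1)} w + q and of P_p(z) = z² + p have the same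
data ρₙ, φₙ; hence M^{(2,1)} has the same dynamics as the slice H(1,i,j) of
the quaternionic Mandelbrot set. -/
theorem sprod21_same_dynamics_as_H1ij (a b c : ℝ) (hbc : (b, c) ≠ (0, 0)) :
    (∃ ρ φ : ℕ → ℝ, ∀ n : ℕ, 1 ≤ n →
      (fun w : ℍ[ℝ] =>
          sCoord (sphRho w ^ 2) (sphTheta w) (2 * sphPhi w) + qmk 0 b c a)^[n] 0 =
        qmk 0 (ρ n * Real.sin (φ n) * (b / Real.sqrt (b ^ 2 + c ^ 2)))
          (ρ n * Real.sin (φ n) * (c / Real.sqrt (b ^ 2 + c ^ 2)))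
          (ρ n * Real.cos (φ n)) ∧
      (fun z : ℍ[ℝ] => z ^ 2 + qmk a b c 0)^[n] 0 =
        qmk (ρ n * Real.cos (φ n))
          (ρ n * Real.sin (φ n) * (b / Real.sqrt (b ^ 2 + c ^ 2)))
          (ρ n * Real.sin (φ n) * (c / Real.sqrt (b ^ 2 + c ^ 2))) 0) ∧
    (Bornology.IsBounded
        (Set.range fun n : ℕ =>
          (fun w : ℍ[ℝ] =>
            sCoord (sphRho w ^ 2) (sphTheta w) (2 * sphPhi w) + qmk 0 b c a)^[n] 0) ↔
      Bornology.IsBounded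
        (Set.range fun n : ℕ =>
          (fun z : ℍ[ℝ] => z ^ 2 + qmk a b c 0)^[n] 0)) := by
  have hbc₂ : 0 < b ^ 2 + c ^ 2 := by
    contrapose! hbc
    rw [Prod.mk.injEq]
    constructor <;> nlinarith [sq_nonneg b, sq_nonneg c]
  set β := Real.sqrt (b ^ 2 + c ^ 2)
  have hβ : β ≠ 0 := (Real.sqrt_pos.2 hbc₂).ne'
  set u := b / β
  set v := c / β
  have huv : u ^ 2 + v ^ 2 = 1 := by
    rw [div_pow, div_pow, ← add_div, Real.sq_sqrt hbc₂.le, div_self hbc₂.ne']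
  set Z : ℕ → ℂ := fun n => (fun z : ℂ => z ^ 2 + ⟨a, β⟩)^[n] 0
  have hQ : ∀ n, (fun w : ℍ[ℝ] =>
      sCoord (sphRho w ^ 2) (sphTheta w) (2 * sphPhi w) + qmk 0 b c a)^[n] 0 = embedIJK u v (Z n) := by
    have hq : qmk 0 b c a = embedIJK u v ⟨a, β⟩ := by
      ext <;> simp only [qmk, embedIJK, u, v] <;> field_simp
    intro n
    rw [hq]
    exact iterate_sprod21Sq_add_embedIJK huv _ n
  have hP : ∀ n, (fun z : ℍ[ℝ] => z ^ 2 + qmk a b c 0)^[n] 0 = embed1IJ u v (Z n) := by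
    have hp : qmk a b c 0 = embed1IJ u v ⟨a, β⟩ := by
      ext <;> simp only [qmk, embed1IJ, u, v] <;> field_simp
    intro n
    rw [hp]
    exact iterate_sq_add_embed1IJ huv _ n
  refine ⟨⟨fun n => ‖Z n‖, fun n => Complex.arg (Z n), fun n _ => ?_⟩, ?_⟩
  · rw [hQ, hP, embedIJK_eq_qmk, embed1IJ_eq_qmk]
    exact ⟨rfl, rfl⟩
  · simp only [hQ, hP]
    exact isBounded_range_iff_of_norm_eq fun n => by rw [norm_embedIJK huv, norm_embed1IJ huv]
end
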